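/- arXiv:2107.03221 — 4 statements merged into one kernel-verified Lean document; each statement's English description precedes it below -/
import Mathlib

section
/- Let ξ:{α+β}→ℂ∖{0} be a map. A linear form λ∈𝔫* belongs to the coadjoint orbit Ω_{{α+β},ξ} if and only if λ_{α+β}=ξ(α+β) and λ_{2α+β}=λ_{3α+β}=λ_{3α+2β}=0 (with λ_α and λ_β arbitrary). -/
open scoped RealInnerProductSpace

/-- The exponential of a (nilpotent) endomorphism, as a finite sum. -/
noncomputable def expNil {M : Type*} [AddCommGroup M] [Module ℂ M] (A : Module.End ℂ M) :
    Module.End ℂ M :=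
  ∑ k ∈ Finset.range (nilpotencyClass A), (k.factorial : ℂ)⁻¹ • A ^ k

/-- The coadjoint orbit `Ω_{D,ξ}` of the linear form `f_{D,ξ} = ∑_{γ∈D} ξ(γ) e_γ*`,
consisting of all `f_{D,ξ} ∘ exp(−ad x)`, `x ∈ 𝔫`.  Roots are encoded by indices. -/
noncomputable def coadjointOrbit {ι : Type*} {n : Type*} [LieRing n] [LieAlgebra ℂ n]
    (e : Module.Basis ι ℂ n) (D : Finset ι) (ξ : ι → ℂ) :
    Set (Module.Dual ℂ n) :=
  {lam | ∃ x : n, lam = (∑ i ∈ D, ξ i • e.coord i).comp (expNil (-(LieAlgebra.ad ℂ n x)))}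

/-- The basic subvariety `𝒪_{D,ξ} = Σ_{γ∈D} Ω_{{γ},ξ|{γ}}`. -/
noncomputable def basicSubvariety {ι : Type*} [DecidableEq ι] {n : Type*} [LieRing n] [LieAlgebra ℂ n]
    (e : Module.Basis ι ℂ n) (D : Finset ι) (ξ : ι → ℂ) :
    Set (Module.Dual ℂ n) :=
  {lam | ∃ μ : ι → Module.Dual ℂ n,
    (∀ i ∈ D, μ i ∈ coadjointOrbit e {i} ξ) ∧ lam = ∑ i ∈ D, μ i}

/-!
Brackets have no `e_α`- or `e_β`-component, so a double bracket `[x, [x, y]]` has no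
`e_{α+β}`-component. For `f = ξ e_{α+β}*` the series `f ∘ exp(−ad x)` therefore stops after its
linear term, and the orbit is `{f − f ∘ ad x}`. Only `[e_α, e_β] = c₁ e_{α+β}` reaches
`e_{α+β}`, so `f ∘ ad x = ξ c₁ (x_α e_β* − x_β e_α*)`, which runs through all of
`ℂ e_α* + ℂ e_β*` as `x` varies, since `ξ c₁ ≠ 0`.
-/

theorem comp_expNil_of_comp_sq_eq_zero {M : Type*} [AddCommGroup M] [Module ℂ M]
    {A : Module.End ℂ M} (hA : IsNilpotent A) {g : Module.Dual ℂ M} (hg : g ∘ₗ (A ^ 2) = 0) :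
    g ∘ₗ expNil A = g + g ∘ₗ A := by
  set u : ℕ → Module.Dual ℂ M := fun k => (k.factorial : ℂ)⁻¹ • g ∘ₗ (A ^ k)
  have hu_two : ∀ k ≥ 2, u k = 0 := by
    intro k hk
    obtain ⟨m, rfl⟩ := Nat.exists_eq_add_of_le hk
    simp only [u, pow_add, Module.End.mul_eq_comp, ← LinearMap.comp_assoc, hg,
      LinearMap.zero_comp, smul_zero]
  have hu_class : ∀ k ≥ nilpotencyClass A, u k = 0 := by
    intro k hk
    simp only [u, pow_eq_zero_of_le hk (pow_nilpotencyClass hA), LinearMap.comp_zero, smul_zero]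
  calc g ∘ₗ expNil A = ∑ k ∈ Finset.range (nilpotencyClass A), u k := by
        ext y; simp [u, expNil]
    _ = ∑ k ∈ Finset.range 2, u k := by
        rw [← Finset.eventually_constant_sum hu_class (le_max_left _ 2),
          Finset.eventually_constant_sum hu_two (le_max_right _ _)]
    _ = g + g ∘ₗ A := by simp [u, Finset.sum_range_succ, Module.End.one_eq_id]

theorem mem_coadjointOrbit_iff {ι L : Type*} [LieRing L] [LieAlgebra ℂ L]
    (e : Module.Basis ι ℂ L) (D : Finset ι) (ξ : ι → ℂ)
    (hnil : ∀ x : L, IsNilpotent (LieAlgebra.ad ℂ L x))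
    (hsq : ∀ x : L, (∑ i ∈ D, ξ i • e.coord i) ∘ₗ (LieAlgebra.ad ℂ L x ^ 2) = 0)
    (lam : Module.Dual ℂ L) :
    lam ∈ coadjointOrbit e D ξ ↔ ∃ x : L,
      lam = ∑ i ∈ D, ξ i • e.coord i - (∑ i ∈ D, ξ i • e.coord i) ∘ₗ LieAlgebra.ad ℂ L x := by
  refine exists_congr fun x => ?_
  rw [comp_expNil_of_comp_sq_eq_zero (hnil x).neg (by rw [neg_sq]; exact hsq x),
    LinearMap.comp_neg, ← sub_eq_add_neg]

theorem linearIndependent_pair_of_inner_sq_ne {E : Type*} [NormedAddCommGroup E]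
    [InnerProductSpace ℝ E] {α β : E} (h : ⟪α, β⟫ ^ 2 ≠ ⟪α, α⟫ * ⟪β, β⟫) :
    LinearIndependent ℝ ![α, β] := by
  rw [← Matrix.det_gram_ne_zero_iff_linearIndependent, Matrix.det_fin_two]
  simp only [Matrix.gram_apply, Matrix.cons_val_zero, Matrix.cons_val_one, real_inner_comm α β]
  intro h'
  exact h (by linear_combination -h')

theorem add_mem_range_iff_of_linearIndependent {E : Type*} [AddCommGroup E] [Module ℝ E]
    {α β : E} (h : LinearIndependent ℝ ![α, β]) {ι : Type*} (c : ι → ℕ × ℕ) (i j : ι) :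
    ((c i).1 • α + (c i).2 • β) + ((c j).1 • α + (c j).2 • β) ∈
        Set.range (fun k => (c k).1 • α + (c k).2 • β) ↔ c i + c j ∈ Set.range c := by
  have hinj := LinearIndependent.pair_iffₛ.mp (h.restrict_scalars' ℕ)
  refine exists_congr fun k => ?_
  dsimp only
  rw [Prod.ext_iff, Prod.fst_add, Prod.snd_add]
  constructor
  · intro hk; exact hinj _ _ _ _ (by rw [hk]; module)
  · rintro ⟨h1, h2⟩; rw [h1, h2]; module

theorem Module.Basis.apply_lie_eq_sum {ι R L : Type*} [Fintype ι] [CommRing R] [LieRing L]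
    [LieAlgebra R L] (e : Module.Basis ι R L) (φ : Module.Dual R L) (x y : L) :
    φ ⁅x, y⁆ = ∑ i, ∑ j, e.repr x i * e.repr y j * φ ⁅e i, e j⁆ := by
  conv_lhs => rw [← e.sum_repr x, ← e.sum_repr y]
  simp only [sum_lie, lie_sum, smul_lie, lie_smul, map_sum, map_smul, smul_eq_mul, Finset.mul_sum]
  rw [Finset.sum_comm]
  simp only [mul_left_comm, mul_assoc]

theorem exists_eq_smul_coord_two_add_iff {R M : Type*} [CommRing R] [AddCommGroup M]
    [Module R M] (e : Module.Basis (Fin 6) R M) (b : R) (lam : Module.Dual R M) :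
    (∃ s t : R, lam = b • e.coord 2 + s • e.coord 0 + t • e.coord 1) ↔
      lam (e 2) = b ∧ lam (e 3) = 0 ∧ lam (e 4) = 0 ∧ lam (e 5) = 0 := by
  constructor
  · rintro ⟨s, t, rfl⟩
    simp
  · rintro ⟨h2, h3, h4, h5⟩
    refine ⟨lam (e 0), lam (e 1), e.ext fun j => ?_⟩
    fin_cases j <;> simp [h2, h3, h4, h5]

def g2RootCoeff : Fin 6 → ℕ × ℕ := ![(1, 0), (0, 1), (1, 1), (2, 1), (3, 1), (3, 2)]

structure IsG2Basis {L : Type*} [LieRing L] [LieAlgebra ℂ L] (e : Module.Basis (Fin 6) ℂ L)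
    (c₁ c₂ c₃ c₄ c₅ : ℂ) : Prop where
  lie_zero_one : ⁅e 0, e 1⁆ = c₁ • e 2
  lie_zero_two : ⁅e 0, e 2⁆ = c₂ • e 3
  lie_zero_three : ⁅e 0, e 3⁆ = c₃ • e 4
  lie_four_one : ⁅e 4, e 1⁆ = c₄ • e 5
  lie_two_three : ⁅e 2, e 3⁆ = c₅ • e 5
  lie_eq_zero : ∀ i j, g2RootCoeff i + g2RootCoeff j ∉ Set.range g2RootCoeff → ⁅e i, e j⁆ = 0

namespace IsG2Basis

variable {L : Type*} [LieRing L] [LieAlgebra ℂ L] {e : Module.Basis (Fin 6) ℂ L}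
  {c₁ c₂ c₃ c₄ c₅ : ℂ}

theorem coord_lie (he : IsG2Basis e c₁ c₂ c₃ c₄ c₅) (x y : L) :
    e.repr ⁅x, y⁆ 0 = 0 ∧ e.repr ⁅x, y⁆ 1 = 0 ∧
      e.repr ⁅x, y⁆ 2 = c₁ * (e.repr x 0 * e.repr y 1 - e.repr x 1 * e.repr y 0) := by
  have h10 : ⁅e 1, e 0⁆ = -(c₁ • e 2) := by rw [← lie_skew, he.lie_zero_one]
  have h20 : ⁅e 2, e 0⁆ = -(c₂ • e 3) := by rw [← lie_skew, he.lie_zero_two]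
  have h30 : ⁅e 3, e 0⁆ = -(c₃ • e 4) := by rw [← lie_skew, he.lie_zero_three]
  have h14 : ⁅e 1, e 4⁆ = -(c₄ • e 5) := by rw [← lie_skew, he.lie_four_one]
  have h32 : ⁅e 3, e 2⁆ = -(c₅ • e 5) := by rw [← lie_skew, he.lie_two_three]
  simp only [← e.coord_apply, e.apply_lie_eq_sum _ x y, Fin.sum_univ_six]
  simp (disch := decide) [he.lie_zero_one, he.lie_zero_two, he.lie_zero_three, he.lie_four_one,
    he.lie_two_three, h10, h20, h30, h14, h32, he.lie_eq_zero]
  ring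

theorem coord_two_comp_ad (he : IsG2Basis e c₁ c₂ c₃ c₄ c₅) (x : L) :
    e.coord 2 ∘ₗ LieAlgebra.ad ℂ L x = c₁ • (e.repr x 0 • e.coord 1 - e.repr x 1 • e.coord 0) := by
  ext y
  simp [(he.coord_lie x y).2.2]

theorem coord_two_comp_ad_sq (he : IsG2Basis e c₁ c₂ c₃ c₄ c₅) (x : L) :
    e.coord 2 ∘ₗ (LieAlgebra.ad ℂ L x ^ 2) = 0 := by
  ext y
  simp [pow_two, (he.coord_lie x _).2.2, (he.coord_lie x y).1, (he.coord_lie x y).2.1]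

end IsG2Basis

theorem stmt1_general {n : Type*} [LieRing n] [LieAlgebra ℂ n]
    (α β : EuclideanSpace ℝ (Fin 2))
    (hαα : ⟪α, α⟫ = 1) (hββ : ⟪β, β⟫ = 3) (hαβ : ⟪α, β⟫ = -(3/2))
    -- the six positive roots of `G₂`: `α, β, α+β, 2α+β, 3α+β, 3α+2β`, indexed by `Fin 6`
    (root : Fin 6 → EuclideanSpace ℝ (Fin 2))
    (hroot : root = ![α, β, α + β, (2:ℝ) • α + β, (3:ℝ) • α + β, (3:ℝ) • α + (2:ℝ) • β])
    (c₁ c₂ c₃ c₄ c₅ : ℂ)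
    (hc₁ : c₁ ≠ 0)
    (e : Module.Basis (Fin 6) ℂ n)
    (h01 : ⁅e 0, e 1⁆ = c₁ • e 2)
    (h02 : ⁅e 0, e 2⁆ = c₂ • e 3)
    (h03 : ⁅e 0, e 3⁆ = c₃ • e 4)
    (h41 : ⁅e 4, e 1⁆ = c₄ • e 5)
    (h23 : ⁅e 2, e 3⁆ = c₅ • e 5)
    (h0 : ∀ i j : Fin 6, root i + root j ∉ Set.range root → ⁅e i, e j⁆ = 0)
    (hnil : ∀ x : n, IsNilpotent (LieAlgebra.ad ℂ n x))
    (ξ : Fin 6 → ℂ) (hξ : ξ 2 ≠ 0)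
    (lam : Module.Dual ℂ n) :
    lam ∈ coadjointOrbit e {2} ξ ↔
      (lam (e 2) = ξ 2 ∧ lam (e 3) = 0 ∧ lam (e 4) = 0 ∧ lam (e 5) = 0) := by
  have hindep : LinearIndependent ℝ ![α, β] :=
    linearIndependent_pair_of_inner_sq_ne (by rw [hαα, hββ, hαβ]; norm_num)
  have hroot' : root = fun k => (g2RootCoeff k).1 • α + (g2RootCoeff k).2 • β := by
    subst hroot; funext k; fin_cases k <;> simp [g2RootCoeff, ofNat_smul_eq_nsmul]
  have he : IsG2Basis e c₁ c₂ c₃ c₄ c₅ := ⟨h01, h02, h03, h41, h23, fun i j hij =>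
    h0 i j (by rwa [hroot', add_mem_range_iff_of_linearIndependent hindep])⟩
  have hf : ∑ i ∈ ({2} : Finset (Fin 6)), ξ i • e.coord i = ξ 2 • e.coord 2 :=
    Finset.sum_singleton _ _
  rw [mem_coadjointOrbit_iff e _ _ hnil fun x => by
      rw [hf, LinearMap.smul_comp, he.coord_two_comp_ad_sq, smul_zero],
    ← exists_eq_smul_coord_two_add_iff e (ξ 2)]
  simp only [hf, LinearMap.smul_comp, he.coord_two_comp_ad]
  constructor
  · rintro ⟨x, rfl⟩
    exact ⟨ξ 2 * c₁ * e.repr x 1, -(ξ 2 * c₁ * e.repr x 0), by module⟩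
  · rintro ⟨s, t, rfl⟩
    refine ⟨(-t / (ξ 2 * c₁)) • e 0 + (s / (ξ 2 * c₁)) • e 1, ?_⟩
    simp only [map_add, map_smul, Module.Basis.repr_self, Finsupp.coe_add, Pi.add_apply,
      Finsupp.smul_single, Finsupp.single_eq_same, Finsupp.single_eq_of_ne, smul_eq_mul, mul_one,
      add_zero, zero_add, ne_eq, zero_ne_one, one_ne_zero, not_false_eq_true]
    match_scalars <;> field_simp

theorem stmt1 {n : Type*} [LieRing n] [LieAlgebra ℂ n]
    (α β : EuclideanSpace ℝ (Fin 2))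
    (hαα : ⟪α, α⟫ = 1) (hββ : ⟪β, β⟫ = 3) (hαβ : ⟪α, β⟫ = -(3/2))
    -- the six positive roots of `G₂`: `α, β, α+β, 2α+β, 3α+β, 3α+2β`, indexed by `Fin 6`
    (root : Fin 6 → EuclideanSpace ℝ (Fin 2))
    (hroot : root = ![α, β, α + β, (2:ℝ) • α + β, (3:ℝ) • α + β, (3:ℝ) • α + (2:ℝ) • β])
    (c₁ c₂ c₃ c₄ c₅ : ℂ)
    (hc₁ : c₁ ≠ 0) (hc₂ : c₂ ≠ 0) (hc₃ : c₃ ≠ 0) (hc₄ : c₄ ≠ 0) (hc₅ : c₅ ≠ 0)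
    (e : Module.Basis (Fin 6) ℂ n)
    (h01 : ⁅e 0, e 1⁆ = c₁ • e 2)
    (h02 : ⁅e 0, e 2⁆ = c₂ • e 3)
    (h03 : ⁅e 0, e 3⁆ = c₃ • e 4)
    (h41 : ⁅e 4, e 1⁆ = c₄ • e 5)
    (h23 : ⁅e 2, e 3⁆ = c₅ • e 5)
    (h0 : ∀ i j : Fin 6, root i + root j ∉ Set.range root → ⁅e i, e j⁆ = 0)
    (hnil : ∀ x : n, IsNilpotent (LieAlgebra.ad ℂ n x))
    (ξ : Fin 6 → ℂ) (hξ : ξ 2 ≠ 0)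
    (lam : Module.Dual ℂ n) :
    lam ∈ coadjointOrbit e {2} ξ ↔
      (lam (e 2) = ξ 2 ∧ lam (e 3) = 0 ∧ lam (e 4) = 0 ∧ lam (e 5) = 0) :=
  stmt1_general α β hαα hββ hαβ root hroot c₁ c₂ c₃ c₄ c₅ hc₁ e h01 h02 h03 h41 h23 h0 hnil ξ hξ lam
end

section
/- Let ξ:{2α+β}→ℂ∖{0} be a map. A linear form λ∈𝔫* belongs to the coadjoint orbit Ω_{{2α+β},ξ} if and only if λ_{2α+β}=ξ(2α+β), 2c₂λ_βλ_{2α+β} − c₁λ_{α+β}² = 0, and λ_{3α+β}=λ_{3α+2β}=0 (with λ_α arbitrary). -/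
open scoped RealInnerProductSpace

/-!
Write `x = ∑ tᵢ eᵢ`. The operator `−ad x = ⁅·, x⁆` strictly raises the height of roots, so for
`f = ξ e*_{2α+β}` one has `f ∘ (−ad x)³ = 0` and `f ∘ exp(−ad x) = f + f ∘ (−ad x) + ½ f ∘ (ad x)²`.
Evaluating on the basis, the orbit consists of the forms with coordinates
`(ξc₂(t_{α+β} − ½c₁t_αt_β), ½ξc₁c₂t_α², −ξc₂t_α, ξ, 0, 0)`. These satisfy the stated equations,
and conversely a solution `λ` is reached with `t_β = 0`, `t_α = −λ_{α+β}/(ξc₂)` and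
`t_{α+β} = λ_α/(ξc₂)`, the value at `e_β` being forced by `2c₂λ_βξ = c₁λ_{α+β}²`.
-/

section ExpNil

variable {M N : Type*} [AddCommGroup M] [Module ℂ M] [AddCommGroup N] [Module ℂ N]

theorem apply_expNil_eq_sum_range {A : Module.End ℂ M} (hA : IsNilpotent A) {f : M →ₗ[ℂ] N}
    {m : ℕ} (hf : f ∘ₗ A ^ m = 0) (v : M) :
    f (expNil A v) = ∑ k ∈ Finset.range m, (k.factorial : ℂ)⁻¹ • f ((A ^ k) v) := by
  have hvanish : ∀ k, m ≤ k ∨ nilpotencyClass A ≤ k → f ((A ^ k) v) = 0 := by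
    rintro k (hk | hk)
    · rw [← Nat.add_sub_cancel' hk, pow_add, Module.End.mul_apply, ← LinearMap.comp_apply, hf,
        LinearMap.zero_apply]
    · rw [pow_eq_zero_of_le hk (pow_nilpotencyClass hA), LinearMap.zero_apply, map_zero]
  have hsum : ∀ l ≤ max m (nilpotencyClass A), (∀ k, l ≤ k → f ((A ^ k) v) = 0) →
      ∑ k ∈ Finset.range l, (k.factorial : ℂ)⁻¹ • f ((A ^ k) v) =
        ∑ k ∈ Finset.range (max m (nilpotencyClass A)), (k.factorial : ℂ)⁻¹ • f ((A ^ k) v) :=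
    fun l hl hzero => Finset.sum_subset (Finset.range_subset_range.2 hl) fun k _ hk => by
      rw [hzero k (by simpa using hk), smul_zero]
  rw [hsum m (le_max_left _ _) fun k hk => hvanish k (.inl hk), expNil, LinearMap.sum_apply,
    map_sum, ← hsum _ (le_max_right _ _) fun k hk => hvanish k (.inr hk)]
  simp only [LinearMap.smul_apply, map_smul]

theorem apply_expNil_of_comp_pow_three_eq_zero {A : Module.End ℂ M} (hA : IsNilpotent A)
    {f : M →ₗ[ℂ] N} (hf : f ∘ₗ A ^ 3 = 0) (v : M) :
    f (expNil A v) = f v + f (A v) + (2 : ℂ)⁻¹ • f (A (A v)) := by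
  simp [apply_expNil_eq_sum_range hA hf, Finset.sum_range_succ, pow_two, Nat.factorial]

end ExpNil

theorem LieAlgebra.neg_ad_apply {R L : Type*} [CommRing R] [LieRing L] [LieAlgebra R L]
    (x y : L) : (-(LieAlgebra.ad R L x)) y = ⁅y, x⁆ := by
  rw [LinearMap.neg_apply, LieAlgebra.ad_apply, lie_skew]

section InnerProductSpace

variable {E : Type*} [NormedAddCommGroup E] [InnerProductSpace ℝ E]

theorem linearIndependent_pair_of_inner_ne {α β : E} (h : ⟪α, α⟫ * ⟪β, β⟫ ≠ ⟪α, β⟫ ^ 2) :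
    LinearIndependent ℝ ![α, β] := by
  refine LinearIndependent.pair_iff.2 fun s t hst => ?_
  have hα : s * ⟪α, α⟫ + t * ⟪α, β⟫ = 0 := by
    simpa only [inner_add_left, real_inner_smul_left, real_inner_comm β, inner_zero_left] using
      congr_arg (⟪·, α⟫) hst
  have hβ : s * ⟪α, β⟫ + t * ⟪β, β⟫ = 0 := by
    simpa only [inner_add_left, real_inner_smul_left, inner_zero_left] using
      congr_arg (⟪·, β⟫) hst
  have hdet : ⟪α, α⟫ * ⟪β, β⟫ - ⟪α, β⟫ ^ 2 ≠ 0 := sub_ne_zero.2 h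
  constructor
  · exact (mul_eq_zero.1 (by linear_combination ⟪β, β⟫ * hα - ⟪α, β⟫ * hβ)).resolve_right hdet
  · exact (mul_eq_zero.1 (by linear_combination ⟪α, α⟫ * hβ - ⟪α, β⟫ * hα)).resolve_right hdet

theorem injective_natCombination_of_linearIndependent {α β : E}
    (h : LinearIndependent ℝ ![α, β]) :
    Function.Injective fun p : ℕ × ℕ => (p.1 : ℝ) • α + (p.2 : ℝ) • β := by
  rintro ⟨p, q⟩ ⟨r, s⟩ hpq
  have := LinearIndependent.pair_iff.1 h (p - r) (q - s) (by
    simp only at hpq; rw [sub_smul, sub_smul]; linear_combination (norm := module) hpq)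
  simp only [sub_eq_zero, Nat.cast_inj] at this
  rw [this.1, this.2]

end InnerProductSpace

-- the coefficients `(a, b)` of the positive roots `a • α + b • β`, in the order of `root`
def g2PosRootCoeffs : Fin 6 → ℕ × ℕ := ![(1, 0), (0, 1), (1, 1), (2, 1), (3, 1), (3, 2)]

theorem g2_root_add_mem_range_iff {α β : EuclideanSpace ℝ (Fin 2)}
    (hαα : ⟪α, α⟫ = 1) (hββ : ⟪β, β⟫ = 3) (hαβ : ⟪α, β⟫ = -(3/2))
    {root : Fin 6 → EuclideanSpace ℝ (Fin 2)}
    (hroot : root = ![α, β, α + β, (2:ℝ) • α + β, (3:ℝ) • α + β, (3:ℝ) • α + (2:ℝ) • β])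
    (i j : Fin 6) :
    root i + root j ∈ Set.range root ↔
      g2PosRootCoeffs i + g2PosRootCoeffs j ∈ Set.range g2PosRootCoeffs := by
  set φ : ℕ × ℕ → EuclideanSpace ℝ (Fin 2) := fun p => (p.1 : ℝ) • α + (p.2 : ℝ) • β
  have hφ : Function.Injective φ := injective_natCombination_of_linearIndependent
    (linearIndependent_pair_of_inner_ne (by rw [hαα, hββ, hαβ]; norm_num))
  have hφadd : ∀ p q, φ (p + q) = φ p + φ q := fun p q => by
    simp only [φ, Prod.fst_add, Prod.snd_add, Nat.cast_add, add_smul]; abel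
  have hrootφ : root = φ ∘ g2PosRootCoeffs := by
    funext k; fin_cases k <;> simp [hroot, φ, g2PosRootCoeffs]
  rw [hrootφ, Set.range_comp, Function.comp_apply, Function.comp_apply, ← hφadd,
    hφ.mem_set_image]

-- the coordinates `j ↦ λ(e j)` of `ξ₃ e₃* ∘ exp(−ad x)`, where `x` has coordinates `t`
noncomputable def g2OrbitPoint (c₁ c₂ ξ₃ : ℂ) (t : Fin 6 → ℂ) : Fin 6 → ℂ :=
  ![ξ₃ * c₂ * (t 2 - 2⁻¹ * c₁ * t 0 * t 1), 2⁻¹ * ξ₃ * c₁ * c₂ * t 0 ^ 2, -(ξ₃ * c₂ * t 0), ξ₃,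
    0, 0]

theorem exists_g2OrbitPoint_iff {c₁ c₂ ξ₃ : ℂ} (hc₂ : c₂ ≠ 0) (hξ₃ : ξ₃ ≠ 0) (μ : Fin 6 → ℂ) :
    (∃ t, ∀ j, μ j = g2OrbitPoint c₁ c₂ ξ₃ t j) ↔
      μ 3 = ξ₃ ∧ 2 * c₂ * μ 1 * μ 3 - c₁ * μ 2 ^ 2 = 0 ∧ μ 4 = 0 ∧ μ 5 = 0 := by
  constructor
  · rintro ⟨t, ht⟩
    simp only [g2OrbitPoint, Fin.isValue, Fin.forall_fin_succ, Matrix.cons_val_zero,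
      Matrix.cons_val_succ, Fin.succ_zero_eq_one, Fin.succ_one_eq_two, Fin.reduceSucc,
      Matrix.cons_val_fin_one, IsEmpty.forall_iff, and_true] at ht
    obtain ⟨-, h1, h2, h3, h4, h5⟩ := ht
    refine ⟨h3, ?_, h4, h5⟩
    rw [h1, h2, h3]
    ring
  · rintro ⟨h3, hrel, h4, h5⟩
    rw [h3] at hrel
    refine ⟨![-(μ 2) / (ξ₃ * c₂), 0, μ 0 / (ξ₃ * c₂), 0, 0, 0], fun j => ?_⟩
    fin_cases j <;>
      simp only [g2OrbitPoint, Fin.isValue, Fin.reduceFinMk, Fin.zero_eta, Fin.mk_one,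
        Matrix.cons_val, Matrix.cons_val_zero, Matrix.cons_val_one, mul_zero, sub_zero, h3, h4, h5]
    · field_simp
    · field_simp
      linear_combination hrel
    · field_simp

structure G2BracketTable {n : Type*} [LieRing n] [LieAlgebra ℂ n]
    (e : Module.Basis (Fin 6) ℂ n) (c₁ c₂ c₃ c₄ c₅ : ℂ) : Prop where
  lie01 : ⁅e 0, e 1⁆ = c₁ • e 2
  lie02 : ⁅e 0, e 2⁆ = c₂ • e 3
  lie03 : ⁅e 0, e 3⁆ = c₃ • e 4
  lie41 : ⁅e 4, e 1⁆ = c₄ • e 5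
  lie23 : ⁅e 2, e 3⁆ = c₅ • e 5
  -- `[e_γ, e_δ] = 0` whenever `γ + δ` is not a root, read in root coordinates
  lie_eq_zero : ∀ i j, (∀ k, g2PosRootCoeffs i + g2PosRootCoeffs j ≠ g2PosRootCoeffs k) →
    ⁅e i, e j⁆ = 0

namespace G2BracketTable

variable {n : Type*} [LieRing n] [LieAlgebra ℂ n] {e : Module.Basis (Fin 6) ℂ n}
  {c₁ c₂ c₃ c₄ c₅ : ℂ}

theorem lie10 (T : G2BracketTable e c₁ c₂ c₃ c₄ c₅) : ⁅e 1, e 0⁆ = -(c₁ • e 2) := by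
  rw [← lie_skew, T.lie01]

theorem lie20 (T : G2BracketTable e c₁ c₂ c₃ c₄ c₅) : ⁅e 2, e 0⁆ = -(c₂ • e 3) := by
  rw [← lie_skew, T.lie02]

theorem lie30 (T : G2BracketTable e c₁ c₂ c₃ c₄ c₅) : ⁅e 3, e 0⁆ = -(c₃ • e 4) := by
  rw [← lie_skew, T.lie03]

theorem lie14 (T : G2BracketTable e c₁ c₂ c₃ c₄ c₅) : ⁅e 1, e 4⁆ = -(c₄ • e 5) := by
  rw [← lie_skew, T.lie41]

theorem lie32 (T : G2BracketTable e c₁ c₂ c₃ c₄ c₅) : ⁅e 3, e 2⁆ = -(c₅ • e 5) := by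
  rw [← lie_skew, T.lie23]

theorem lie_e0 (T : G2BracketTable e c₁ c₂ c₃ c₄ c₅) (x : n) : ⁅e 0, x⁆ =
    (c₁ * e.repr x 1) • e 2 + (c₂ * e.repr x 2) • e 3 + (c₃ * e.repr x 3) • e 4 := by
  conv_lhs => rw [← e.sum_repr x, Fin.sum_univ_six]
  simp (disch := decide) only [lie_add, lie_smul, lie_self, T.lie01, T.lie02, T.lie03,
    T.lie_eq_zero]
  module

theorem lie_e1 (T : G2BracketTable e c₁ c₂ c₃ c₄ c₅) (x : n) :
    ⁅e 1, x⁆ = -(c₁ * e.repr x 0) • e 2 - (c₄ * e.repr x 4) • e 5 := by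
  conv_lhs => rw [← e.sum_repr x, Fin.sum_univ_six]
  simp (disch := decide) only [lie_add, lie_smul, lie_self, T.lie10, T.lie14, T.lie_eq_zero]
  module

theorem lie_e2 (T : G2BracketTable e c₁ c₂ c₃ c₄ c₅) (x : n) :
    ⁅e 2, x⁆ = -(c₂ * e.repr x 0) • e 3 + (c₅ * e.repr x 3) • e 5 := by
  conv_lhs => rw [← e.sum_repr x, Fin.sum_univ_six]
  simp (disch := decide) only [lie_add, lie_smul, lie_self, T.lie20, T.lie23, T.lie_eq_zero]
  module

theorem lie_e3 (T : G2BracketTable e c₁ c₂ c₃ c₄ c₅) (x : n) :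
    ⁅e 3, x⁆ = -(c₃ * e.repr x 0) • e 4 - (c₅ * e.repr x 2) • e 5 := by
  conv_lhs => rw [← e.sum_repr x, Fin.sum_univ_six]
  simp (disch := decide) only [lie_add, lie_smul, lie_self, T.lie30, T.lie32, T.lie_eq_zero]
  module

theorem lie_e4 (T : G2BracketTable e c₁ c₂ c₃ c₄ c₅) (x : n) :
    ⁅e 4, x⁆ = (c₄ * e.repr x 1) • e 5 := by
  conv_lhs => rw [← e.sum_repr x, Fin.sum_univ_six]
  simp (disch := decide) only [lie_add, lie_smul, lie_self, T.lie41, T.lie_eq_zero]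
  module

theorem lie_e5 (T : G2BracketTable e c₁ c₂ c₃ c₄ c₅) (x : n) : ⁅e 5, x⁆ = 0 := by
  conv_lhs => rw [← e.sum_repr x, Fin.sum_univ_six]
  simp (disch := decide) only [lie_add, lie_smul, lie_self, T.lie_eq_zero]
  module

theorem coord_three_comp_neg_ad_pow_three (T : G2BracketTable e c₁ c₂ c₃ c₄ c₅) (x : n) :
    e.coord 3 ∘ₗ (-(LieAlgebra.ad ℂ n x)) ^ 3 = 0 := by
  refine e.ext fun j => ?_
  fin_cases j <;>
    simp only [LinearMap.comp_apply, pow_succ, pow_zero, one_mul, Module.End.mul_apply,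
      LieAlgebra.neg_ad_apply] <;>
    simp [T.lie_e0, T.lie_e1, T.lie_e2, T.lie_e3, T.lie_e4, T.lie_e5]

theorem smul_coord_three_comp_expNil_apply (T : G2BracketTable e c₁ c₂ c₃ c₄ c₅) (ξ₃ : ℂ) {x : n}
    (hx : IsNilpotent (LieAlgebra.ad ℂ n x)) (j : Fin 6) :
    ((ξ₃ • e.coord 3) ∘ₗ expNil (-(LieAlgebra.ad ℂ n x))) (e j) =
      g2OrbitPoint c₁ c₂ ξ₃ (e.repr x) j := by
  have hf : (ξ₃ • e.coord 3) ∘ₗ (-(LieAlgebra.ad ℂ n x)) ^ 3 = 0 := by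
    rw [LinearMap.smul_comp, T.coord_three_comp_neg_ad_pow_three, smul_zero]
  rw [LinearMap.comp_apply, apply_expNil_of_comp_pow_three_eq_zero hx.neg hf]
  simp only [LieAlgebra.neg_ad_apply]
  fin_cases j <;>
    simp [g2OrbitPoint, T.lie_e0, T.lie_e1, T.lie_e2, T.lie_e3, T.lie_e4, T.lie_e5] <;>
    ring

theorem mem_coadjointOrbit_iff (T : G2BracketTable e c₁ c₂ c₃ c₄ c₅)
    (hnil : ∀ x : n, IsNilpotent (LieAlgebra.ad ℂ n x)) (ξ : Fin 6 → ℂ)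
    (lam : Module.Dual ℂ n) :
    lam ∈ coadjointOrbit e {3} ξ ↔ ∃ t, ∀ j, lam (e j) = g2OrbitPoint c₁ c₂ (ξ 3) t j := by
  have hpoint : ∀ x, lam = (∑ i ∈ {3}, ξ i • e.coord i) ∘ₗ expNil (-(LieAlgebra.ad ℂ n x)) ↔
      ∀ j, lam (e j) = g2OrbitPoint c₁ c₂ (ξ 3) (e.repr x) j := fun x => by
    simp only [Finset.sum_singleton, ← T.smul_coord_three_comp_expNil_apply _ (hnil x)]
    exact ⟨fun h j => by rw [h], e.ext⟩
  refine (exists_congr hpoint).trans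
    ⟨fun ⟨x, hx⟩ => ⟨e.repr x, hx⟩, fun ⟨t, ht⟩ => ⟨e.equivFun.symm t, ?_⟩⟩
  rwa [← e.equivFun_apply, e.equivFun.apply_symm_apply]

theorem of_roots {α β : EuclideanSpace ℝ (Fin 2)}
    (hαα : ⟪α, α⟫ = 1) (hββ : ⟪β, β⟫ = 3) (hαβ : ⟪α, β⟫ = -(3/2))
    {root : Fin 6 → EuclideanSpace ℝ (Fin 2)}
    (hroot : root = ![α, β, α + β, (2:ℝ) • α + β, (3:ℝ) • α + β, (3:ℝ) • α + (2:ℝ) • β])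
    (h01 : ⁅e 0, e 1⁆ = c₁ • e 2) (h02 : ⁅e 0, e 2⁆ = c₂ • e 3) (h03 : ⁅e 0, e 3⁆ = c₃ • e 4)
    (h41 : ⁅e 4, e 1⁆ = c₄ • e 5) (h23 : ⁅e 2, e 3⁆ = c₅ • e 5)
    (h0 : ∀ i j : Fin 6, root i + root j ∉ Set.range root → ⁅e i, e j⁆ = 0) :
    G2BracketTable e c₁ c₂ c₃ c₄ c₅ where
  lie01 := h01
  lie02 := h02
  lie03 := h03
  lie41 := h41
  lie23 := h23
  lie_eq_zero i j hij := h0 i j fun hmem => by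
    obtain ⟨k, hk⟩ := (g2_root_add_mem_range_iff hαα hββ hαβ hroot i j).1 hmem
    exact hij k hk.symm

end G2BracketTable

theorem stmt2_general {n : Type*} [LieRing n] [LieAlgebra ℂ n]
    (α β : EuclideanSpace ℝ (Fin 2))
    (hαα : ⟪α, α⟫ = 1) (hββ : ⟪β, β⟫ = 3) (hαβ : ⟪α, β⟫ = -(3/2))
    -- the six positive roots of `G₂`: `α, β, α+β, 2α+β, 3α+β, 3α+2β`, indexed by `Fin 6`
    (root : Fin 6 → EuclideanSpace ℝ (Fin 2))
    (hroot : root = ![α, β, α + β, (2:ℝ) • α + β, (3:ℝ) • α + β, (3:ℝ) • α + (2:ℝ) • β])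
    (c₁ c₂ c₃ c₄ c₅ : ℂ)
    (hc₂ : c₂ ≠ 0)
    (e : Module.Basis (Fin 6) ℂ n)
    (h01 : ⁅e 0, e 1⁆ = c₁ • e 2)
    (h02 : ⁅e 0, e 2⁆ = c₂ • e 3)
    (h03 : ⁅e 0, e 3⁆ = c₃ • e 4)
    (h41 : ⁅e 4, e 1⁆ = c₄ • e 5)
    (h23 : ⁅e 2, e 3⁆ = c₅ • e 5)
    (h0 : ∀ i j : Fin 6, root i + root j ∉ Set.range root → ⁅e i, e j⁆ = 0)
    (hnil : ∀ x : n, IsNilpotent (LieAlgebra.ad ℂ n x))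
    (ξ : Fin 6 → ℂ) (hξ : ξ 3 ≠ 0)
    (lam : Module.Dual ℂ n) :
    lam ∈ coadjointOrbit e {3} ξ ↔
      (lam (e 3) = ξ 3 ∧ 2 * c₂ * lam (e 1) * lam (e 3) - c₁ * lam (e 2) ^ 2 = 0 ∧
        lam (e 4) = 0 ∧ lam (e 5) = 0) := by
  have T := G2BracketTable.of_roots hαα hββ hαβ hroot h01 h02 h03 h41 h23 h0
  rw [T.mem_coadjointOrbit_iff hnil, exists_g2OrbitPoint_iff hc₂ hξ fun j => lam (e j)]

theorem stmt2 {n : Type*} [LieRing n] [LieAlgebra ℂ n]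
    (α β : EuclideanSpace ℝ (Fin 2))
    (hαα : ⟪α, α⟫ = 1) (hββ : ⟪β, β⟫ = 3) (hαβ : ⟪α, β⟫ = -(3/2))
    -- the six positive roots of `G₂`: `α, β, α+β, 2α+β, 3α+β, 3α+2β`, indexed by `Fin 6`
    (root : Fin 6 → EuclideanSpace ℝ (Fin 2))
    (hroot : root = ![α, β, α + β, (2:ℝ) • α + β, (3:ℝ) • α + β, (3:ℝ) • α + (2:ℝ) • β])
    (c₁ c₂ c₃ c₄ c₅ : ℂ)
    (hc₁ : c₁ ≠ 0) (hc₂ : c₂ ≠ 0) (hc₃ : c₃ ≠ 0) (hc₄ : c₄ ≠ 0) (hc₅ : c₅ ≠ 0)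
    (e : Module.Basis (Fin 6) ℂ n)
    (h01 : ⁅e 0, e 1⁆ = c₁ • e 2)
    (h02 : ⁅e 0, e 2⁆ = c₂ • e 3)
    (h03 : ⁅e 0, e 3⁆ = c₃ • e 4)
    (h41 : ⁅e 4, e 1⁆ = c₄ • e 5)
    (h23 : ⁅e 2, e 3⁆ = c₅ • e 5)
    (h0 : ∀ i j : Fin 6, root i + root j ∉ Set.range root → ⁅e i, e j⁆ = 0)
    (hnil : ∀ x : n, IsNilpotent (LieAlgebra.ad ℂ n x))
    (ξ : Fin 6 → ℂ) (hξ : ξ 3 ≠ 0)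
    (lam : Module.Dual ℂ n) :
    lam ∈ coadjointOrbit e {3} ξ ↔
      (lam (e 3) = ξ 3 ∧ 2 * c₂ * lam (e 1) * lam (e 3) - c₁ * lam (e 2) ^ 2 = 0 ∧
        lam (e 4) = 0 ∧ lam (e 5) = 0) :=
  stmt2_general α β hαα hββ hαβ root hroot c₁ c₂ c₃ c₄ c₅ hc₂ e h01 h02 h03 h41 h23 h0 hnil ξ hξ lam
end

section
/- Let ξ:{3α+β}→ℂ∖{0} be a map. A linear form λ∈𝔫* belongs to the coadjoint orbit Ω_{{3α+β},ξ} if and only if λ_{3α+β}=ξ(3α+β), λ_{3α+2β}=0, 6c₃²λ_βλ_{3α+β}² − c₁c₂λ_{2α+β}³ = 0, and 2c₃λ_{α+β}λ_{3α+β} − c₂λ_{2α+β}² = 0 (with λ_α arbitrary). -/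
/-!
Bracketing with a root vector raises the root height, so `(ad x)^5 = 0` and
`e*_{3α+β} ∘ exp(-ad x)` is an explicit polynomial in the coordinates of `x`. On the orbit,
`λ_{2α+β} = -c₃ ξ x_α` and `λ_α` is affine in `x_{2α+β}` with slope `c₃ ξ`; eliminating `x_α`
from the formulas for `λ_β` and `λ_{α+β}` gives the two relations, and since `c₃ ξ ≠ 0` any `λ`
satisfying them is reached with `x_β = x_{α+β} = 0`.
-/

open scoped RealInnerProductSpace

lemma linearIndependent_pair_of_gram_ne_zero {V : Type*} [NormedAddCommGroup V]
    [InnerProductSpace ℝ V] {α β : V} (h : ⟪α, α⟫ * ⟪β, β⟫ - ⟪α, β⟫ ^ 2 ≠ 0) :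
    LinearIndependent ℝ ![α, β] := by
  rw [LinearIndependent.pair_iff]
  intro s t hst
  have hα : s * ⟪α, α⟫ + t * ⟪α, β⟫ = 0 := by
    simpa only [inner_add_right, real_inner_smul_right, inner_zero_right]
      using congrArg (⟪α, ·⟫) hst
  have hβ : s * ⟪α, β⟫ + t * ⟪β, β⟫ = 0 := by
    simpa only [inner_add_right, real_inner_smul_right, inner_zero_right, real_inner_comm α β]
      using congrArg (⟪β, ·⟫) hst
  constructor
  · exact (mul_eq_zero.1 (by linear_combination ⟪β, β⟫ * hα - ⟪α, β⟫ * hβ)).resolve_right h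
  · exact (mul_eq_zero.1 (by linear_combination ⟪α, α⟫ * hβ - ⟪α, β⟫ * hα)).resolve_right h

lemma LinearIndependent.natCast_pair_injective {R M : Type*} [Ring R] [CharZero R]
    [AddCommGroup M] [Module R M] {x y : M} (h : LinearIndependent R ![x, y]) :
    Function.Injective fun p : ℕ × ℕ ↦ (p.1 : R) • x + (p.2 : R) • y := by
  intro p q hpq
  obtain ⟨h₁, h₂⟩ := h.eq_of_pair hpq
  exact Prod.ext (by exact_mod_cast h₁) (by exact_mod_cast h₂)

/-- `root i = (g2Coeff i).1 • α + (g2Coeff i).2 • β` -/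
def g2Coeff : Fin 6 → ℕ × ℕ := ![(1, 0), (0, 1), (1, 1), (2, 1), (3, 1), (3, 2)]

lemma g2Coeff_add_mem_range {α β : EuclideanSpace ℝ (Fin 2)}
    (hαα : ⟪α, α⟫ = 1) (hββ : ⟪β, β⟫ = 3) (hαβ : ⟪α, β⟫ = -(3/2))
    {root : Fin 6 → EuclideanSpace ℝ (Fin 2)}
    (hroot : root = ![α, β, α + β, (2:ℝ) • α + β, (3:ℝ) • α + β, (3:ℝ) • α + (2:ℝ) • β])
    {i j : Fin 6} (hij : root i + root j ∈ Set.range root) :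
    g2Coeff i + g2Coeff j ∈ Set.range g2Coeff := by
  set f := fun p : ℕ × ℕ ↦ (p.1 : ℝ) • α + (p.2 : ℝ) • β
  have hf : Function.Injective f := (linearIndependent_pair_of_gram_ne_zero
    (by rw [hαα, hββ, hαβ]; norm_num)).natCast_pair_injective
  have hroot_f : root = f ∘ g2Coeff := by
    subst hroot; funext k; fin_cases k <;> simp [f, g2Coeff]
  obtain ⟨k, hk⟩ := hij
  refine ⟨k, hf ?_⟩
  rw [hroot_f] at hk
  simpa [f, add_smul, add_add_add_comm] using hk

lemma lie_eq_sum_repr_smul_lie {ι R L : Type*} [Fintype ι] [CommRing R] [LieRing L]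
    [LieAlgebra R L] (e : Module.Basis ι R L) (x y : L) :
    ⁅x, y⁆ = ∑ i, e.repr x i • ⁅e i, y⁆ := by
  conv_lhs => rw [← e.sum_repr x]
  simp only [sum_lie, smul_lie]

lemma expNil_eq_sum_range_of_pow_eq_zero {M : Type*} [AddCommGroup M] [Module ℂ M]
    {A : Module.End ℂ M} {N : ℕ} (hN : A ^ N = 0) :
    expNil A = ∑ k ∈ Finset.range N, (k.factorial : ℂ)⁻¹ • A ^ k := by
  refine Finset.sum_subset (Finset.range_subset_range.2 (Nat.sInf_le hN)) fun k _ hk ↦ ?_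
  rw [Finset.mem_range, not_lt] at hk
  rw [pow_eq_zero_of_le hk (pow_nilpotencyClass ⟨N, hN⟩), smul_zero]

/-- The values of `e*₄ ∘ exp(-ad x)` on `e₀, …, e₅`, where `xᵢ = e.repr x i`. -/
def orbitCoord {K : Type*} [Field K] (c₁ c₂ c₃ x₀ x₁ x₂ x₃ : K) : Fin 6 → K :=
  ![c₃ * x₃ - c₂ * c₃ * x₀ * x₂ / 2 + c₁ * c₂ * c₃ * x₀ ^ 2 * x₁ / 6,
    -(c₁ * c₂ * c₃ * x₀ ^ 3) / 6, c₂ * c₃ * x₀ ^ 2 / 2, -(c₃ * x₀), 1, 0]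

structure IsG2Basis_s3 {n : Type*} [LieRing n] [LieAlgebra ℂ n] (e : Module.Basis (Fin 6) ℂ n)
    (c₁ c₂ c₃ c₄ c₅ : ℂ) : Prop where
  lie_e0_e1 : ⁅e 0, e 1⁆ = c₁ • e 2
  lie_e0_e2 : ⁅e 0, e 2⁆ = c₂ • e 3
  lie_e0_e3 : ⁅e 0, e 3⁆ = c₃ • e 4
  lie_e4_e1 : ⁅e 4, e 1⁆ = c₄ • e 5
  lie_e2_e3 : ⁅e 2, e 3⁆ = c₅ • e 5
  lie_eq_zero : ∀ i j, g2Coeff i + g2Coeff j ∉ Set.range g2Coeff → ⁅e i, e j⁆ = 0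

namespace IsG2Basis_s3

open LieAlgebra

variable {n : Type*} [LieRing n] [LieAlgebra ℂ n] {e : Module.Basis (Fin 6) ℂ n}
  {c₁ c₂ c₃ c₄ c₅ : ℂ}

lemma lie_e0 (he : IsG2Basis_s3 e c₁ c₂ c₃ c₄ c₅) (x : n) :
    ⁅x, e 0⁆ = -(c₁ * e.repr x 1) • e 2 - (c₂ * e.repr x 2) • e 3
      - (c₃ * e.repr x 3) • e 4 := by
  rw [lie_eq_sum_repr_smul_lie e, Fin.sum_univ_six, ← lie_skew (e 1) (e 0),
    ← lie_skew (e 2) (e 0), ← lie_skew (e 3) (e 0), he.lie_e0_e1, he.lie_e0_e2, he.lie_e0_e3]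
  simp (disch := decide) only [he.lie_eq_zero]
  module

lemma lie_e1 (he : IsG2Basis_s3 e c₁ c₂ c₃ c₄ c₅) (x : n) :
    ⁅x, e 1⁆ = (c₁ * e.repr x 0) • e 2 + (c₄ * e.repr x 4) • e 5 := by
  rw [lie_eq_sum_repr_smul_lie e, Fin.sum_univ_six, he.lie_e0_e1, he.lie_e4_e1]
  simp (disch := decide) only [he.lie_eq_zero]
  module

lemma lie_e2 (he : IsG2Basis_s3 e c₁ c₂ c₃ c₄ c₅) (x : n) :
    ⁅x, e 2⁆ = (c₂ * e.repr x 0) • e 3 - (c₅ * e.repr x 3) • e 5 := by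
  rw [lie_eq_sum_repr_smul_lie e, Fin.sum_univ_six, he.lie_e0_e2, ← lie_skew (e 3) (e 2),
    he.lie_e2_e3]
  simp (disch := decide) only [he.lie_eq_zero]
  module

lemma lie_e3 (he : IsG2Basis_s3 e c₁ c₂ c₃ c₄ c₅) (x : n) :
    ⁅x, e 3⁆ = (c₃ * e.repr x 0) • e 4 + (c₅ * e.repr x 2) • e 5 := by
  rw [lie_eq_sum_repr_smul_lie e, Fin.sum_univ_six, he.lie_e0_e3, he.lie_e2_e3]
  simp (disch := decide) only [he.lie_eq_zero]
  module

lemma lie_e4 (he : IsG2Basis_s3 e c₁ c₂ c₃ c₄ c₅) (x : n) :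
    ⁅x, e 4⁆ = -(c₄ * e.repr x 1) • e 5 := by
  rw [lie_eq_sum_repr_smul_lie e, Fin.sum_univ_six, ← lie_skew (e 1) (e 4), he.lie_e4_e1]
  simp (disch := decide) only [he.lie_eq_zero]
  module

lemma lie_e5 (he : IsG2Basis_s3 e c₁ c₂ c₃ c₄ c₅) (x : n) : ⁅x, e 5⁆ = 0 := by
  rw [lie_eq_sum_repr_smul_lie e, Fin.sum_univ_six]
  simp (disch := decide) only [he.lie_eq_zero]
  module

lemma ad_pow_five (he : IsG2Basis_s3 e c₁ c₂ c₃ c₄ c₅) (x : n) : ad ℂ n x ^ 5 = 0 := by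
  refine e.ext fun i ↦ ?_
  fin_cases i <;>
    simp [pow_succ, he.lie_e0, he.lie_e1, he.lie_e2, he.lie_e3, he.lie_e4, he.lie_e5]

lemma coord_four_expNil_neg_ad (he : IsG2Basis_s3 e c₁ c₂ c₃ c₄ c₅) (x : n) (j : Fin 6) :
    e.coord 4 (expNil (-ad ℂ n x) (e j)) =
      orbitCoord c₁ c₂ c₃ (e.repr x 0) (e.repr x 1) (e.repr x 2) (e.repr x 3) j := by
  have h5 : (-ad ℂ n x) ^ 5 = 0 := by rw [neg_pow, he.ad_pow_five, mul_zero]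
  rw [expNil_eq_sum_range_of_pow_eq_zero h5]
  fin_cases j <;>
    simp [orbitCoord, Finset.sum_range_succ, pow_succ, he.lie_e0, he.lie_e1,
      he.lie_e2, he.lie_e3, he.lie_e4, he.lie_e5, smul_smul, Nat.factorial] <;>
    ring

end IsG2Basis_s3

lemma mem_coadjointOrbit_singleton_iff {ι n : Type*} [LieRing n] [LieAlgebra ℂ n]
    (e : Module.Basis ι ℂ n) (i : ι) (ξ : ι → ℂ) (lam : Module.Dual ℂ n) :
    lam ∈ coadjointOrbit e {i} ξ ↔
      ∃ x : n, ∀ j, lam (e j) = ξ i * e.coord i (expNil (-LieAlgebra.ad ℂ n x) (e j)) := by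
  simp only [coadjointOrbit, Set.mem_ofPred_eq, Finset.sum_singleton]
  exact exists_congr fun x ↦ ⟨fun h j ↦ by rw [h]; rfl, fun h ↦ e.ext h⟩

lemma exists_orbitCoord_iff {K : Type*} [Field K] [CharZero K] {c₁ c₂ c₃ ξ : K}
    (hc₃ : c₃ ≠ 0) (hξ : ξ ≠ 0) (l : Fin 6 → K) :
    (∃ x₀ x₁ x₂ x₃ : K, ∀ j, l j = ξ * orbitCoord c₁ c₂ c₃ x₀ x₁ x₂ x₃ j) ↔
      l 4 = ξ ∧ l 5 = 0 ∧ 6 * c₃ ^ 2 * l 1 * l 4 ^ 2 - c₁ * c₂ * l 3 ^ 3 = 0 ∧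
        2 * c₃ * l 2 * l 4 - c₂ * l 3 ^ 2 = 0 := by
  constructor
  · rintro ⟨x₀, x₁, x₂, x₃, hl⟩
    simp only [hl, orbitCoord, Matrix.cons_val]
    refine ⟨?_, ?_, ?_, ?_⟩ <;> ring
  · rintro ⟨hl₄, hl₅, hl₁, hl₂⟩
    rw [hl₄] at hl₁ hl₂
    refine ⟨-l 3 / (c₃ * ξ), 0, 0, l 0 / (c₃ * ξ), fun j ↦ ?_⟩
    fin_cases j <;>
      simp only [orbitCoord, Fin.zero_eta, Fin.mk_one, Fin.reduceFinMk, Matrix.cons_val,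
        Matrix.cons_val_zero, Matrix.cons_val_one, mul_zero, zero_div, sub_zero, add_zero,
        mul_one, hl₄, hl₅] <;>
      field_simp
    · linear_combination hl₁
    · linear_combination hl₂

theorem stmt3_general {n : Type*} [LieRing n] [LieAlgebra ℂ n]
    (α β : EuclideanSpace ℝ (Fin 2))
    (hαα : ⟪α, α⟫ = 1) (hββ : ⟪β, β⟫ = 3) (hαβ : ⟪α, β⟫ = -(3/2))
    -- the six positive roots of `G₂`: `α, β, α+β, 2α+β, 3α+β, 3α+2β`, indexed by `Fin 6`
    (root : Fin 6 → EuclideanSpace ℝ (Fin 2))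
    (hroot : root = ![α, β, α + β, (2:ℝ) • α + β, (3:ℝ) • α + β, (3:ℝ) • α + (2:ℝ) • β])
    (c₁ c₂ c₃ c₄ c₅ : ℂ)
    (hc₃ : c₃ ≠ 0)
    (e : Module.Basis (Fin 6) ℂ n)
    (h01 : ⁅e 0, e 1⁆ = c₁ • e 2)
    (h02 : ⁅e 0, e 2⁆ = c₂ • e 3)
    (h03 : ⁅e 0, e 3⁆ = c₃ • e 4)
    (h41 : ⁅e 4, e 1⁆ = c₄ • e 5)
    (h23 : ⁅e 2, e 3⁆ = c₅ • e 5)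
    (h0 : ∀ i j : Fin 6, root i + root j ∉ Set.range root → ⁅e i, e j⁆ = 0)
    (ξ : Fin 6 → ℂ) (hξ : ξ 4 ≠ 0)
    (lam : Module.Dual ℂ n) :
    lam ∈ coadjointOrbit e {4} ξ ↔
      (lam (e 4) = ξ 4 ∧ lam (e 5) = 0 ∧
        6 * c₃ ^ 2 * lam (e 1) * lam (e 4) ^ 2 - c₁ * c₂ * lam (e 3) ^ 3 = 0 ∧
        2 * c₃ * lam (e 2) * lam (e 4) - c₂ * lam (e 3) ^ 2 = 0) := by
  have he : IsG2Basis_s3 e c₁ c₂ c₃ c₄ c₅ := ⟨h01, h02, h03, h41, h23, fun i j hij ↦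
    h0 i j fun hroot_ij ↦ hij (g2Coeff_add_mem_range hαα hββ hαβ hroot hroot_ij)⟩
  rw [mem_coadjointOrbit_singleton_iff, ← exists_orbitCoord_iff hc₃ hξ fun j ↦ lam (e j)]
  simp_rw [he.coord_four_expNil_neg_ad]
  constructor
  · rintro ⟨x, hx⟩
    exact ⟨_, _, _, _, hx⟩
  · rintro ⟨x₀, x₁, x₂, x₃, hx⟩
    refine ⟨∑ i, ![x₀, x₁, x₂, x₃, 0, 0] i • e i, ?_⟩
    simpa only [e.repr_sum_self, Matrix.cons_val] using hx

theorem stmt3 {n : Type*} [LieRing n] [LieAlgebra ℂ n]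
    (α β : EuclideanSpace ℝ (Fin 2))
    (hαα : ⟪α, α⟫ = 1) (hββ : ⟪β, β⟫ = 3) (hαβ : ⟪α, β⟫ = -(3/2))
    -- the six positive roots of `G₂`: `α, β, α+β, 2α+β, 3α+β, 3α+2β`, indexed by `Fin 6`
    (root : Fin 6 → EuclideanSpace ℝ (Fin 2))
    (hroot : root = ![α, β, α + β, (2:ℝ) • α + β, (3:ℝ) • α + β, (3:ℝ) • α + (2:ℝ) • β])
    (c₁ c₂ c₃ c₄ c₅ : ℂ)
    (hc₁ : c₁ ≠ 0) (hc₂ : c₂ ≠ 0) (hc₃ : c₃ ≠ 0) (hc₄ : c₄ ≠ 0) (hc₅ : c₅ ≠ 0)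
    (e : Module.Basis (Fin 6) ℂ n)
    (h01 : ⁅e 0, e 1⁆ = c₁ • e 2)
    (h02 : ⁅e 0, e 2⁆ = c₂ • e 3)
    (h03 : ⁅e 0, e 3⁆ = c₃ • e 4)
    (h41 : ⁅e 4, e 1⁆ = c₄ • e 5)
    (h23 : ⁅e 2, e 3⁆ = c₅ • e 5)
    (h0 : ∀ i j : Fin 6, root i + root j ∉ Set.range root → ⁅e i, e j⁆ = 0)
    (hnil : ∀ x : n, IsNilpotent (LieAlgebra.ad ℂ n x))
    (ξ : Fin 6 → ℂ) (hξ : ξ 4 ≠ 0)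
    (lam : Module.Dual ℂ n) :
    lam ∈ coadjointOrbit e {4} ξ ↔
      (lam (e 4) = ξ 4 ∧ lam (e 5) = 0 ∧
        6 * c₃ ^ 2 * lam (e 1) * lam (e 4) ^ 2 - c₁ * c₂ * lam (e 3) ^ 3 = 0 ∧
        2 * c₃ * lam (e 2) * lam (e 4) - c₂ * lam (e 3) ^ 2 = 0) :=
  stmt3_general α β hαα hββ hαβ root hroot c₁ c₂ c₃ c₄ c₅ hc₃ e h01 h02 h03 h41 h23 h0 ξ hξ lam
end

section
/- The only rook placement in G₂⁺ that is not non-singular is D = {α, α+β}; i.e., a subset D⊆G₂⁺ is a rook placement with γ−δ∈G₂⁺ for some distinct γ,δ∈D if and only if D = {α, α+β}. -/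
/-!
Writing positive roots as `a • α + b • β` with `(a, b) ∈ ℤ²`, twice the inner product becomes
the integral form `2ac + 6bd - 3(ad + bc)`, which is positive definite; hence the coefficient map
is injective, and both the rook condition and the condition `γ - δ ∈ G₂⁺` become statements about
six integer pairs, settled by a finite check. Among distinct positive roots with non-positive inner
product, only `α + β` and `α` differ by a root, and no third positive root has non-positive inner
product with both of them.
-/

open scoped RealInnerProductSpace

namespace G2

def posRootCoeffs : Finset (ℤ × ℤ) := {(1, 0), (0, 1), (1, 1), (2, 1), (3, 1), (3, 2)}

-- the Gram form of `α, β`, doubled so that it is integral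
def twiceInner (p q : ℤ × ℤ) : ℤ := 2 * p.1 * q.1 + 6 * p.2 * q.2 - 3 * (p.1 * q.2 + p.2 * q.1)

theorem twiceInner_self_eq_zero {p : ℤ × ℤ} (h : twiceInner p p = 0) : p = 0 := by
  obtain ⟨a, b⟩ := p
  simp only [twiceInner] at h
  have hb : b = 0 := by nlinarith [sq_nonneg (2 * a - 3 * b)]
  subst hb
  ext <;> simp_all

theorem eq_of_twiceInner_nonpos_of_sub_mem :
    ∀ p ∈ posRootCoeffs, ∀ q ∈ posRootCoeffs, p ≠ q → twiceInner p q ≤ 0 →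
      p - q ∈ posRootCoeffs → p = (1, 1) ∧ q = (1, 0) := by
  decide

theorem eq_or_eq_of_twiceInner_nonpos :
    ∀ r ∈ posRootCoeffs, (r ≠ (1, 0) → twiceInner r (1, 0) ≤ 0) →
      (r ≠ (1, 1) → twiceInner r (1, 1) ≤ 0) → r = (1, 0) ∨ r = (1, 1) := by
  decide

section

variable {E : Type*} [NormedAddCommGroup E] [InnerProductSpace ℝ E] (α β : E)

def coeffVec (p : ℤ × ℤ) : E := (p.1 : ℝ) • α + (p.2 : ℝ) • β

theorem coeffVec_sub (p q : ℤ × ℤ) :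
    coeffVec α β (p - q) = coeffVec α β p - coeffVec α β q := by
  simp only [coeffVec, Prod.fst_sub, Prod.snd_sub, Int.cast_sub, sub_smul]
  abel

variable {α β}

theorem two_mul_inner_coeffVec (hαα : ⟪α, α⟫ = 1) (hββ : ⟪β, β⟫ = 3) (hαβ : ⟪α, β⟫ = -(3/2))
    (p q : ℤ × ℤ) : 2 * ⟪coeffVec α β p, coeffVec α β q⟫ = twiceInner p q := by
  have hβα : ⟪β, α⟫ = -(3/2) := by rw [real_inner_comm, hαβ]
  simp only [coeffVec, twiceInner, inner_add_left, inner_add_right, real_inner_smul_left,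
    real_inner_smul_right, hαα, hββ, hαβ, hβα]
  push_cast
  ring

theorem inner_coeffVec_nonpos_iff (hαα : ⟪α, α⟫ = 1) (hββ : ⟪β, β⟫ = 3)
    (hαβ : ⟪α, β⟫ = -(3/2)) {p q : ℤ × ℤ} :
    ⟪coeffVec α β p, coeffVec α β q⟫ ≤ 0 ↔ twiceInner p q ≤ 0 := by
  rw [← Int.cast_nonpos (R := ℝ), ← two_mul_inner_coeffVec hαα hββ hαβ]
  constructor <;> intro h <;> linarith

theorem coeffVec_injective (hαα : ⟪α, α⟫ = 1) (hββ : ⟪β, β⟫ = 3) (hαβ : ⟪α, β⟫ = -(3/2)) :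
    Function.Injective (coeffVec α β) := by
  intro p q h
  have h0 : coeffVec α β (p - q) = 0 := by rw [coeffVec_sub, h, sub_self]
  have := two_mul_inner_coeffVec hαα hββ hαβ (p - q) (p - q)
  rw [h0, inner_zero_left, mul_zero, eq_comm] at this
  exact sub_eq_zero.mp (twiceInner_self_eq_zero (by exact_mod_cast this))

theorem image_coeffVec_posRootCoeffs :
    coeffVec α β '' posRootCoeffs =
      {α, β, α + β, (2:ℝ) • α + β, (3:ℝ) • α + β, (3:ℝ) • α + (2:ℝ) • β} := by
  simp [posRootCoeffs, coeffVec, Set.image_insert_eq]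

end

end G2

open G2

theorem stmt10
    (α β : EuclideanSpace ℝ (Fin 2))
    (hαα : ⟪α, α⟫ = 1) (hββ : ⟪β, β⟫ = 3) (hαβ : ⟪α, β⟫ = -(3/2))
    -- the set of positive roots of `G₂`
    (G2P : Set (EuclideanSpace ℝ (Fin 2)))
    (hG2P : G2P = {α, β, α + β, (2:ℝ) • α + β, (3:ℝ) • α + β, (3:ℝ) • α + (2:ℝ) • β})
    (D : Set (EuclideanSpace ℝ (Fin 2))) (hD : D ⊆ G2P) :
    ((∀ γ ∈ D, ∀ δ ∈ D, γ ≠ δ → ⟪γ, δ⟫ ≤ 0) ∧ ∃ γ ∈ D, ∃ δ ∈ D, γ ≠ δ ∧ γ - δ ∈ G2P) ↔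
      D = {α, α + β} := by
  have nonpos_iff {p q} := inner_coeffVec_nonpos_iff (p := p) (q := q) hαα hββ hαβ
  have hinj := coeffVec_injective hαα hββ hαβ
  rw [← image_coeffVec_posRootCoeffs (α := α) (β := β)] at hG2P
  subst hG2P
  have hpair : ({α, α + β} : Set (EuclideanSpace ℝ (Fin 2))) =
      {coeffVec α β (1, 0), coeffVec α β (1, 1)} := by simp [coeffVec]
  constructor
  · rintro ⟨hrook, γ, hγ, δ, hδ, hne, r, hr, hrγδ⟩
    obtain ⟨p, hp, rfl⟩ := hD hγ
    obtain ⟨q, hq, rfl⟩ := hD hδ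
    rw [← coeffVec_sub] at hrγδ
    obtain ⟨rfl, rfl⟩ := eq_of_twiceInner_nonpos_of_sub_mem p hp q hq (fun h => hne (congrArg _ h))
      (nonpos_iff.1 (hrook _ hγ _ hδ hne)) (hinj hrγδ ▸ hr)
    have nonpos {r s} (hr : coeffVec α β r ∈ D) (hs : coeffVec α β s ∈ D) :
        r ≠ s → twiceInner r s ≤ 0 := fun h =>
      nonpos_iff.1 (hrook _ hr _ hs (fun h' => h (hinj h')))
    rw [hpair]
    refine (Set.insert_subset hδ (Set.singleton_subset_iff.2 hγ)).antisymm' fun x hx => ?_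
    obtain ⟨r, hr, rfl⟩ := hD hx
    rcases eq_or_eq_of_twiceInner_nonpos r hr (nonpos hx hδ) (nonpos hx hγ) with rfl | rfl <;> simp
  · rintro rfl
    rw [hpair]
    refine ⟨?_, coeffVec α β (1, 1), by simp, coeffVec α β (1, 0), by simp, hinj.ne (by decide),
      (0, 1), by decide, ?_⟩
    · rintro γ (rfl | rfl) δ (rfl | rfl) hne <;>
        first | exact absurd rfl hne | exact nonpos_iff.2 (by decide)
    · rw [← coeffVec_sub]
      rfl
end
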